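/- Let A be a symmetric endomorphism with Newton transformation P_{r-1} positive semidefinite and satisfying tr(P_{r-1} A²) ≤ r and tr(P_{r-1}) ≤ M. Then r² σ_r² ≤ r M; in particular σ_r² ≤ M/r is bounded. -/

import Mathlib

open Matrix Finset

/-!
`P_{r-1}` is a polynomial in `A`, so `tr (P_{r-1} A) = Σ_j (-1)^j σ_{r-1-j} p_{j+1}(λ)`, where
`p_m(λ) = tr (A^m)` are the power sums of the eigenvalues; by Newton's identities this is `r σ_r`.
A positive semidefinite `P` defines the semi-inner product `⟪X, Y⟫ = tr (Y P Xᴴ)` on matrices, and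
Cauchy–Schwarz for `X = 1`, `Y = A` gives `tr (P A)² ≤ tr P · tr (P A²)`, which is at most `M r`.
-/

/-- The `p`-th elementary symmetric polynomial of `k 1, ..., k n`. -/
noncomputable def esymmF (n : ℕ) (k : Fin n → ℝ) (p : ℕ) : ℝ :=
  ∑ s ∈ (Finset.univ : Finset (Fin n)).powersetCard p, ∏ i ∈ s, k i

/-- The `r`-th Newton transformation `P_r = Σ_{j=0}^r (-1)^j σ_{r-j} A^j`. -/
noncomputable def newtonT (n : ℕ) (A : Matrix (Fin n) (Fin n) ℝ) (k : Fin n → ℝ) (r : ℕ) :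
    Matrix (Fin n) (Fin n) ℝ :=
  ∑ j ∈ Finset.range (r + 1), ((-1 : ℝ) ^ j * esymmF n k (r - j)) • A ^ j

lemma esymmF_eq_eval (n : ℕ) (k : Fin n → ℝ) (p : ℕ) :
    esymmF n k p = MvPolynomial.eval k (MvPolynomial.esymm (Fin n) ℝ p) := by
  simp [esymmF, MvPolynomial.esymm]

theorem succ_mul_esymmF_eq_sum (n s : ℕ) (k : Fin n → ℝ) :
    (s + 1) * esymmF n k (s + 1) =
      ∑ p ∈ antidiagonal s, (-1 : ℝ) ^ p.1 * esymmF n k p.2 * ∑ i, k i ^ (p.1 + 1) := by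
  have h := congrArg (MvPolynomial.eval k) (MvPolynomial.mul_esymm_eq_sum (Fin n) ℝ (s + 1))
  rw [sum_filter, Nat.sum_antidiagonal_succ', if_neg (lt_irrefl _), zero_add] at h
  simp only [map_mul, map_sum, map_pow, map_neg, map_one, map_natCast, ← esymmF_eq_eval] at h
  push_cast at h
  rw [h, mul_sum, ← Nat.sum_antidiagonal_swap]
  refine sum_congr rfl fun p hp => ?_
  rw [HasAntidiagonal.mem_antidiagonal] at hp
  simp only [Prod.fst_swap, Prod.snd_swap, if_pos (show p.2 < s + 1 by omega), map_mul, map_pow,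
    map_neg, map_one, MvPolynomial.psum, map_sum, MvPolynomial.eval_X, ← esymmF_eq_eval]
  have hsign : (-1 : ℝ) ^ (s + 1 + 1) * (-1) ^ p.2 = (-1) ^ p.1 := by
    rw [← hp, ← pow_add, show p.1 + p.2 + 1 + 1 + p.2 = p.1 + 2 * (p.2 + 1) by ring, pow_add,
      pow_mul, neg_one_sq, one_pow, mul_one]
  rw [← mul_assoc, ← mul_assoc, hsign]

theorem Matrix.IsHermitian.trace_pow {m 𝕜 : Type*} [Fintype m] [DecidableEq m] [RCLike 𝕜]
    {A : Matrix m m 𝕜} (hA : A.IsHermitian) (j : ℕ) :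
    (A ^ j).trace = ∑ i, (hA.eigenvalues i : 𝕜) ^ j := by
  conv_lhs => rw [hA.spectral_theorem, ← map_pow, Unitary.conjStarAlgAut_apply, trace_mul_cycle,
    Unitary.coe_star_mul_self, one_mul, diagonal_pow, trace_diagonal]
  rfl

theorem trace_newtonT_mul {n : ℕ} {A : Matrix (Fin n) (Fin n) ℝ} (hA : A.IsHermitian) (s : ℕ) :
    (newtonT n A hA.eigenvalues s * A).trace = (s + 1) * esymmF n hA.eigenvalues (s + 1) := by
  rw [succ_mul_esymmF_eq_sum, newtonT, ← Nat.sum_antidiagonal_eq_sum_range_succ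
    (fun j a => ((-1 : ℝ) ^ j * esymmF n hA.eigenvalues a) • A ^ j), sum_mul, trace_sum]
  refine sum_congr rfl fun p _ => ?_
  rw [smul_mul_assoc, ← pow_succ, trace_smul, hA.trace_pow, smul_eq_mul]
  rfl

theorem Matrix.PosSemidef.trace_mul_sq_le {m : Type*} [Fintype m] [DecidableEq m]
    {P A : Matrix m m ℝ} (hP : P.PosSemidef) (hA : A.IsHermitian) :
    (P * A).trace ^ 2 ≤ P.trace * (P * A ^ 2).trace := by
  let := P.toMatrixSeminormedAddCommGroup hP
  let := P.toMatrixInnerProductSpace hP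
  have hPA : inner ℝ (1 : Matrix m m ℝ) A = (P * A).trace := by
    show (A * P * 1ᴴ).trace = _
    rw [conjTranspose_one, mul_one, trace_mul_comm]
  have hP1 : inner ℝ (1 : Matrix m m ℝ) 1 = P.trace := by
    show (1 * P * 1ᴴ).trace = _
    rw [conjTranspose_one, mul_one, one_mul]
  have hPAA : inner ℝ A A = (P * A ^ 2).trace := by
    show (A * P * Aᴴ).trace = _
    rw [hA.eq, trace_mul_comm, ← mul_assoc, trace_mul_comm, sq]
  rw [sq, ← hPA, ← hP1, ← hPAA]
  exact real_inner_mul_inner_self_le 1 A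

theorem sigma_bound_general (n r : ℕ) (hr1 : 1 ≤ r)
    (A : Matrix (Fin n) (Fin n) ℝ) (hA : A.IsHermitian) (M : ℝ)
    (hP : (newtonT n A hA.eigenvalues (r - 1)).PosSemidef)
    (htr2 : (newtonT n A hA.eigenvalues (r - 1) * A ^ 2).trace ≤ (r : ℝ))
    (htr : (newtonT n A hA.eigenvalues (r - 1)).trace ≤ M) :
    (r : ℝ) ^ 2 * esymmF n hA.eigenvalues r ^ 2 ≤ (r : ℝ) * M ∧
      esymmF n hA.eigenvalues r ^ 2 ≤ M / r := by
  obtain ⟨s, rfl⟩ := Nat.exists_eq_add_of_le' hr1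
  rw [Nat.add_sub_cancel] at hP htr2 htr
  have hCS := hP.trace_mul_sq_le hA
  rw [trace_newtonT_mul] at hCS
  have hbound : ((s + 1 : ℕ) : ℝ) ^ 2 * esymmF n hA.eigenvalues (s + 1) ^ 2 ≤ (s + 1 : ℕ) * M :=
    calc _ = ((s + 1 : ℝ) * esymmF n hA.eigenvalues (s + 1)) ^ 2 := by push_cast; ring
      _ ≤ _ := hCS
      _ ≤ _ * (s + 1 : ℕ) := mul_le_mul_of_nonneg_left htr2 hP.trace_nonneg
      _ ≤ M * (s + 1 : ℕ) := mul_le_mul_of_nonneg_right htr (Nat.cast_nonneg _)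
      _ = _ := mul_comm _ _
  have hr : (0 : ℝ) < (s + 1 : ℕ) := by positivity
  refine ⟨hbound, ?_⟩
  rw [le_div_iff₀ hr]
  refine le_of_mul_le_mul_left (le_of_eq_of_le ?_ hbound) hr
  ring

/-- If P_{r-1} is positive semidefinite with tr(P_{r-1}A²) ≤ r and tr(P_{r-1}) ≤ M,
then r² σ_r² ≤ r M; in particular σ_r² ≤ M/r. -/
theorem sigma_bound (n r : ℕ) (hr1 : 1 ≤ r) (hrn : r ≤ n)
    (A : Matrix (Fin n) (Fin n) ℝ) (hA : A.IsHermitian) (M : ℝ)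
    (hP : (newtonT n A hA.eigenvalues (r - 1)).PosSemidef)
    (htr2 : (newtonT n A hA.eigenvalues (r - 1) * A ^ 2).trace ≤ (r : ℝ))
    (htr : (newtonT n A hA.eigenvalues (r - 1)).trace ≤ M) :
    (r : ℝ) ^ 2 * esymmF n hA.eigenvalues r ^ 2 ≤ (r : ℝ) * M ∧
      esymmF n hA.eigenvalues r ^ 2 ≤ M / r :=
  sigma_bound_general n r hr1 A hA M hP htr2 htr
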